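/- arXiv:1108.4609 — 6 statements merged into one kernel-verified Lean document; each statement's English description precedes it below -/
import Mathlib

section
/- For H ∈ ℝ, ρ ∈ ℝ and m ∈ (0,∞), define δ := ρ/m and J_{H,ρ,m}(t) := ((c_δ(t) + (H/m) s_δ(t))₊)^m, where s_δ, c_δ are the generalized sine/cosine functions and f₊ denotes truncation of f between its first nonpositive and first positive roots. Then on the maximal open interval around 0 where J := J_{H,ρ,m} is positive and smooth, J satisfies the ODE −(log J)'' − (1/m)((log J)')² = ρ with J(0) = 1 and J'(0) = H. -/
open scoped Classical

noncomputable def sdel (δ t : ℝ) : ℝ :=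
  if 0 < δ then Real.sin (Real.sqrt δ * t) / Real.sqrt δ
  else if δ = 0 then t
  else Real.sinh (Real.sqrt (-δ) * t) / Real.sqrt (-δ)

noncomputable def cdel (δ t : ℝ) : ℝ :=
  if 0 < δ then Real.cos (Real.sqrt δ * t)
  else if δ = 0 then 1
  else Real.cosh (Real.sqrt (-δ) * t)

/-- Truncation `f₊` of `f` between its first nonpositive and first positive roots. -/
noncomputable def truncPos (f : ℝ → ℝ) (t : ℝ) : ℝ :=
  if ∃ s ∈ Set.Ioo (min t 0) (max t 0), f s = 0 then 0 else f t

/-- The model Jacobian `J_{H,ρ,m}` for `m ∈ (0,∞)`. -/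
noncomputable def Jfun (H ρ m : ℝ) (t : ℝ) : ℝ :=
  (truncPos (fun s => cdel (ρ / m) s + (H / m) * sdel (ρ / m) s) t) ^ m

open Set Filter Topology

/-! The function `φ = c_δ + c s_δ` solves `φ'' = -δ φ`, `φ(0) = 1`, `φ'(0) = c`. Where `φ > 0`,
`log J = m log φ` has derivative `m φ'/φ` and second derivative `-m δ - m (φ'/φ)²`, so
`-(log J)'' - (log J)'² / m = m δ = ρ`. Before its first zero on either side of `0`, the truncated
function `φ₊` agrees with `φ` on a neighbourhood of each point, and positivity of `J = φ₊ ^ m` on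
`[0, t]` forces `φ > 0` there: a zero of `φ₊` gives `J = 0`, and `φ < 0` somewhere would give a
zero of `φ` strictly between it and `0`. -/

lemma sdel_zero (δ : ℝ) : sdel δ 0 = 0 := by
  unfold sdel; split_ifs <;> simp

lemma cdel_zero (δ : ℝ) : cdel δ 0 = 1 := by
  unfold cdel; split_ifs <;> simp

lemma hasDerivAt_sdel (δ t : ℝ) : HasDerivAt (sdel δ) (cdel δ t) t := by
  unfold sdel cdel
  split_ifs with hpos hzero
  · have hsqrt : Real.sqrt δ ≠ 0 := (Real.sqrt_pos.mpr hpos).ne'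
    refine ((((hasDerivAt_id' t).const_mul (Real.sqrt δ)).sin).div_const _).congr_deriv ?_
    field_simp
  · exact hasDerivAt_id t
  · have hsqrt : Real.sqrt (-δ) ≠ 0 := (Real.sqrt_pos.mpr (by grind)).ne'
    refine ((((hasDerivAt_id' t).const_mul (Real.sqrt (-δ))).sinh).div_const _).congr_deriv ?_
    field_simp

lemma hasDerivAt_cdel (δ t : ℝ) : HasDerivAt (cdel δ) (-δ * sdel δ t) t := by
  unfold sdel cdel
  split_ifs with hpos hzero
  · have hsqrt : Real.sqrt δ ≠ 0 := (Real.sqrt_pos.mpr hpos).ne'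
    refine (((hasDerivAt_id' t).const_mul (Real.sqrt δ)).cos).congr_deriv ?_
    field_simp
    rw [Real.sq_sqrt hpos.le]
    ring
  · simpa [hzero] using hasDerivAt_const t (1 : ℝ)
  · have hδ : 0 ≤ -δ := by grind
    have hsqrt : Real.sqrt (-δ) ≠ 0 := (Real.sqrt_pos.mpr (by grind)).ne'
    refine (((hasDerivAt_id' t).const_mul (Real.sqrt (-δ))).cosh).congr_deriv ?_
    field_simp
    rw [Real.sq_sqrt hδ]
    ring

lemma hasDerivAt_cdel_add_mul_sdel (δ c t : ℝ) :
    HasDerivAt (fun s => cdel δ s + c * sdel δ s) (-δ * sdel δ t + c * cdel δ t) t :=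
  (hasDerivAt_cdel δ t).add ((hasDerivAt_sdel δ t).const_mul c)

lemma hasDerivAt_neg_mul_sdel_add_mul_cdel (δ c t : ℝ) :
    HasDerivAt (fun s => -δ * sdel δ s + c * cdel δ s) (-δ * (cdel δ t + c * sdel δ t)) t := by
  refine (((hasDerivAt_sdel δ t).const_mul (-δ)).add
    ((hasDerivAt_cdel δ t).const_mul c)).congr_deriv ?_
  ring

theorem neg_deriv_deriv_mul_log_sub_sq {y y' : ℝ → ℝ} {δ m t : ℝ} (hm : m ≠ 0)
    (hy : ∀ s, HasDerivAt y (y' s) s) (hy' : ∀ s, HasDerivAt y' (-δ * y s) s) (ht : y t ≠ 0) :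
    -deriv (deriv fun s => m * Real.log (y s)) t
      - 1 / m * deriv (fun s => m * Real.log (y s)) t ^ 2 = m * δ := by
  have hne : ∀ᶠ s in 𝓝 t, y s ≠ 0 := (hy t).continuousAt.eventually_ne ht
  have hderiv : deriv (fun s => m * Real.log (y s)) =ᶠ[𝓝 t] fun s => m * (y' s / y s) :=
    hne.mono fun s hs => (((hy s).log hs).const_mul m).deriv
  have hderiv' : HasDerivAt (fun s => m * (y' s / y s))
      (m * ((-δ * y t * y t - y' t * y' t) / y t ^ 2)) t :=
    ((hy' t).div (hy t) ht).const_mul m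
  rw [hderiv.deriv_eq, hderiv.self_of_nhds, hderiv'.deriv]
  field_simp
  ring

lemma truncPos_zero (f : ℝ → ℝ) : truncPos f 0 = f 0 := by
  simp [truncPos]

lemma truncPos_eq_of_forall_uIcc_pos {f : ℝ → ℝ} {s : ℝ} (h : ∀ u ∈ uIcc 0 s, 0 < f u) :
    truncPos f s = f s := by
  refine if_neg fun ⟨u, hu, hfu⟩ => (h u ?_).ne' hfu
  rw [uIcc_comm]
  exact Ioo_subset_Icc_self hu

lemma pos_of_truncPos_ne_zero {f : ℝ → ℝ} (hf : Continuous f) (h0 : 0 < f 0) {s : ℝ}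
    (hs : truncPos f s ≠ 0) : 0 < f s := by
  have hroot : ¬∃ u ∈ Ioo (min s 0) (max s 0), f u = 0 := fun h => hs (if_pos h)
  have hfs : f s ≠ 0 := by rwa [truncPos, if_neg hroot] at hs
  by_contra! hneg
  obtain ⟨u, hu, hfu⟩ : (0 : ℝ) ∈ f '' uIcc s 0 :=
    intermediate_value_uIcc hf.continuousOn (mem_uIcc.mpr (Or.inl ⟨hneg, h0.le⟩))
  have hus : u ≠ s := by rintro rfl; exact hfs hfu
  have hu0 : u ≠ 0 := by rintro rfl; exact h0.ne' hfu
  refine hroot ⟨u, ?_, hfu⟩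
  rcases le_total s 0 with hs0 | hs0
  · rw [uIcc_of_le hs0] at hu
    rw [min_eq_left hs0, max_eq_right hs0]
    exact ⟨lt_of_le_of_ne hu.1 hus.symm, lt_of_le_of_ne hu.2 hu0⟩
  · rw [uIcc_of_ge hs0] at hu
    rw [min_eq_right hs0, max_eq_left hs0]
    exact ⟨lt_of_le_of_ne hu.1 hu0.symm, lt_of_le_of_ne hu.2 hus⟩

lemma eventually_forall_uIcc_pos {f : ℝ → ℝ} (hf : Continuous f) {t : ℝ}
    (h : ∀ u ∈ uIcc 0 t, 0 < f u) : ∀ᶠ s in 𝓝 t, ∀ u ∈ uIcc 0 s, 0 < f u := by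
  obtain ⟨a, b, htab, hab⟩ :=
    (continuousAt_const.eventually_lt hf.continuousAt (h t right_mem_uIcc)).exists_Ioo_subset
  filter_upwards [Ioo_mem_nhds htab.1 htab.2] with s hs u hu
  rcases uIcc_subset_uIcc_union_uIcc hu with hu | hu
  · exact h u hu
  · exact hab (ordConnected_Ioo.uIcc_subset htab hs hu)

lemma truncPos_eventuallyEq {f : ℝ → ℝ} (hf : Continuous f) {t : ℝ}
    (h : ∀ u ∈ uIcc 0 t, 0 < f u) : truncPos f =ᶠ[𝓝 t] f :=
  (eventually_forall_uIcc_pos hf h).mono fun _ => truncPos_eq_of_forall_uIcc_pos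

/-- on the maximal interval around `0` where `J := J_{H,ρ,m}` is positive
(and hence smooth), `J` satisfies `−(log J)'' − (1/m)((log J)')² = ρ`, `J 0 = 1`, `J' 0 = H`. -/
theorem stmt0 (H ρ m : ℝ) (hm : 0 < m) :
    Jfun H ρ m 0 = 1 ∧ deriv (Jfun H ρ m) 0 = H ∧
    ∀ t : ℝ, (∀ s ∈ Set.uIcc 0 t, 0 < Jfun H ρ m s) →
      -(deriv (deriv (fun s => Real.log (Jfun H ρ m s))) t)
        - (1 / m) * (deriv (fun s => Real.log (Jfun H ρ m s)) t) ^ 2 = ρ := by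
  set φ := fun s => cdel (ρ / m) s + (H / m) * sdel (ρ / m) s
  have hJ : Jfun H ρ m = fun s => truncPos φ s ^ m := rfl
  have hφ' : ∀ t, HasDerivAt φ (-(ρ / m) * sdel (ρ / m) t + H / m * cdel (ρ / m) t) t :=
    hasDerivAt_cdel_add_mul_sdel _ _
  have hφ : Continuous φ := continuous_iff_continuousAt.mpr fun t => (hφ' t).continuousAt
  have hφ0 : φ 0 = 1 := by simp [φ, sdel_zero, cdel_zero]
  refine ⟨by simp only [hJ, truncPos_zero, hφ0, Real.one_rpow], ?_, fun t ht => ?_⟩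
  · have hJφ : Jfun H ρ m =ᶠ[𝓝 0] fun s => φ s ^ m :=
      (truncPos_eventuallyEq hφ (by simp [hφ0])).fun_comp (· ^ m)
    rw [hJφ.deriv_eq, ((hφ' 0).rpow_const (Or.inl (by simp [hφ0]))).deriv]
    simp [hφ0, sdel_zero, cdel_zero, hm.ne']
  · have hpos : ∀ s ∈ uIcc 0 t, 0 < φ s := fun s hs =>
      pos_of_truncPos_ne_zero hφ (by simp [hφ0]) fun h => by
        simpa [hJ, h, Real.zero_rpow hm.ne'] using ht s hs
    have hlog : (fun s => Real.log (Jfun H ρ m s)) =ᶠ[𝓝 t] fun s => m * Real.log (φ s) :=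
      (eventually_forall_uIcc_pos hφ hpos).mono fun s hs => by
        simp only [hJ]
        rw [truncPos_eq_of_forall_uIcc_pos hs, Real.log_rpow (hs s right_mem_uIcc)]
    rw [hlog.deriv.deriv_eq, hlog.deriv_eq,
      neg_deriv_deriv_mul_log_sub_sq hm.ne' (hasDerivAt_cdel_add_mul_sdel _ _)
        (hasDerivAt_neg_mul_sdel_add_mul_cdel _ _) (hpos t right_mem_uIcc).ne']
    field_simp
end

section
/- For fixed H ∈ ℝ and ρ ∈ ℝ, the pointwise limit as m → ∞ of J_{H,ρ,m}(t) = ((c_{ρ/m}(t) + (H/m) s_{ρ/m}(t))₊)^m equals exp(H t − (ρ/2) t²), for every t ∈ ℝ. -/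
/-!
Write `c_δ t = cos (w t)` and `s_δ t · w = sin (w t)` for a complex `w` with `w² = δ`; the complex
Taylor bounds for `cos` and `sin` then give, with `δ = ρ/m`,
`m (c_δ s + (H/m) s_δ s - 1) = H s - ρ s²/2 + O(1/m)` uniformly for `|s| ≤ |t|`.
So the base is eventually positive on `[-|t|, |t|]`, the truncation is inactive, and
`(1 + x_m/m)^m → exp (lim x_m)`.
-/

open scoped Classical

open Filter Topology

lemma exists_sq_eq_and_cdel_sdel_eq_cos_sin (δ : ℝ) :
    ∃ w : ℂ, w ^ 2 = δ ∧ ‖w‖ ^ 2 = |δ| ∧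
      ∀ t : ℝ, (cdel δ t : ℂ) = Complex.cos (w * t) ∧ (sdel δ t : ℂ) * w = Complex.sin (w * t) := by
  rcases lt_trichotomy δ 0 with hδ | rfl | hδ
  · have hr : Real.sqrt (-δ) ≠ 0 := (Real.sqrt_pos.2 (neg_pos.2 hδ)).ne'
    refine ⟨Real.sqrt (-δ) * Complex.I, ?_, ?_, fun t => ?_⟩
    · rw [mul_pow, Complex.I_sq, ← Complex.ofReal_pow, Real.sq_sqrt (neg_nonneg.2 hδ.le)]
      push_cast; ring
    · rw [norm_mul, Complex.norm_I, mul_one, Complex.norm_real, Real.norm_eq_abs, sq_abs,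
        Real.sq_sqrt (neg_nonneg.2 hδ.le), abs_of_neg hδ]
    · have hw : (Real.sqrt (-δ) * Complex.I) * t = ((Real.sqrt (-δ) * t : ℝ) : ℂ) * Complex.I := by
        push_cast; ring
      simp only [cdel, sdel, if_neg hδ.not_gt, if_neg hδ.ne, hw, Complex.cos_mul_I,
        Complex.sin_mul_I]
      refine ⟨by push_cast; rfl, ?_⟩
      push_cast
      field_simp [Complex.ofReal_ne_zero.2 hr]
  · refine ⟨0, by simp, by simp, fun t => ?_⟩
    simp [cdel, sdel]
  · have hr : Real.sqrt δ ≠ 0 := (Real.sqrt_pos.2 hδ).ne'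
    refine ⟨Real.sqrt δ, ?_, ?_, fun t => ?_⟩
    · rw [← Complex.ofReal_pow, Real.sq_sqrt hδ.le]
    · rw [Complex.norm_real, Real.norm_eq_abs, sq_abs, Real.sq_sqrt hδ.le, abs_of_pos hδ]
    · simp only [cdel, sdel, if_pos hδ]
      push_cast
      exact ⟨rfl, by field_simp [Complex.ofReal_ne_zero.2 hr]⟩

lemma abs_cdel_sub_le {δ t : ℝ} (h : |δ| * t ^ 2 ≤ 1) :
    |cdel δ t - (1 - δ * t ^ 2 / 2)| ≤ δ ^ 2 * t ^ 4 := by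
  obtain ⟨w, hw2, hwn, hw⟩ := exists_sq_eq_and_cdel_sdel_eq_cos_sin δ
  have hz : ‖w * t‖ ^ 2 = |δ| * t ^ 2 := by
    rw [norm_mul, mul_pow, hwn, Complex.norm_real, Real.norm_eq_abs, sq_abs]
  have hz1 : ‖w * t‖ ≤ 1 := by nlinarith [norm_nonneg (w * t)]
  have key := Complex.cos_bound hz1
  rw [← (hw t).1, mul_pow, hw2] at key
  calc |cdel δ t - (1 - δ * t ^ 2 / 2)|
      = ‖((cdel δ t : ℂ) - (1 - δ * t ^ 2 / 2))‖ := by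
        rw [← Real.norm_eq_abs, ← Complex.norm_real]; push_cast; rfl
    _ ≤ (‖w * t‖ ^ 2) ^ 2 * (5 / 96) := by rw [← pow_mul]; exact key
    _ = δ ^ 2 * t ^ 4 * (5 / 96) := by rw [hz, mul_pow, sq_abs]; ring
    _ ≤ δ ^ 2 * t ^ 4 := by
        have : 0 ≤ δ ^ 2 * t ^ 4 := by positivity
        linarith

lemma abs_sdel_sub_le {δ t : ℝ} (h : |δ| * t ^ 2 ≤ 1) :
    |sdel δ t - t| ≤ |δ| * |t| ^ 3 := by
  rcases eq_or_ne δ 0 with rfl | hδ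
  · simp [sdel]
  obtain ⟨w, hw2, hwn, hw⟩ := exists_sq_eq_and_cdel_sdel_eq_cos_sin δ
  have hw0 : 0 < ‖w‖ := norm_pos_iff.2 fun h => hδ (by simpa [h] using hw2.symm)
  have hz1 : ‖w * t‖ ≤ 1 := by
    have : ‖w * t‖ ^ 2 ≤ 1 := by
      rwa [norm_mul, mul_pow, hwn, Complex.norm_real, Real.norm_eq_abs, sq_abs]
    nlinarith [norm_nonneg (w * t)]
  have hsin : ‖Complex.sin (w * t) - w * t‖ ≤ ‖w * t‖ ^ 3 :=
    calc ‖Complex.sin (w * t) - w * t‖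
        = ‖(Complex.sin (w * t) - (w * t - (w * t) ^ 3 / 6)) - (w * t) ^ 3 / 6‖ := by ring_nf
      _ ≤ ‖Complex.sin (w * t) - (w * t - (w * t) ^ 3 / 6)‖ + ‖(w * t) ^ 3 / 6‖ := norm_sub_le _ _
      _ ≤ ‖w * t‖ ^ 5 / 100 + ‖w * t‖ ^ 3 / 6 := by
          gcongr
          · exact Complex.sin_bound hz1
          · simp [norm_pow]
      _ ≤ ‖w * t‖ ^ 3 := by
          have := pow_le_one₀ (norm_nonneg (w * t)) hz1 (n := 2)
          nlinarith [pow_nonneg (norm_nonneg (w * t)) 3]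
  have hdiff : Complex.sin (w * t) - w * t = ((sdel δ t - t : ℝ) : ℂ) * w := by
    rw [← (hw t).2]; push_cast; ring
  rw [hdiff, norm_mul, norm_mul, mul_pow, Complex.norm_real, Complex.norm_real, Real.norm_eq_abs,
    Real.norm_eq_abs, pow_succ, hwn] at hsin
  exact le_of_mul_le_mul_right (hsin.trans_eq (by ring)) hw0

noncomputable def jacBase (H ρ m s : ℝ) : ℝ :=
  cdel (ρ / m) s + (H / m) * sdel (ρ / m) s

lemma abs_mul_jacBase_sub_one_sub_le {H ρ m s : ℝ} (hm : 0 < m) (hs : |ρ| * s ^ 2 ≤ m) :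
    |m * (jacBase H ρ m s - 1) - (H * s - ρ / 2 * s ^ 2)| ≤
      (ρ ^ 2 * s ^ 4 + |H| * |ρ| * |s| ^ 3) / m := by
  have hδ : |ρ / m| * s ^ 2 ≤ 1 := by
    rw [abs_div, abs_of_pos hm, div_mul_eq_mul_div, div_le_one hm]; exact hs
  have hc := abs_cdel_sub_le hδ
  have hsd := abs_sdel_sub_le hδ
  calc |m * (jacBase H ρ m s - 1) - (H * s - ρ / 2 * s ^ 2)|
      = |m * (cdel (ρ / m) s - (1 - ρ / m * s ^ 2 / 2)) + H * (sdel (ρ / m) s - s)| := by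
        congr 1; unfold jacBase; field_simp; ring
    _ ≤ m * ((ρ / m) ^ 2 * s ^ 4) + |H| * (|ρ / m| * |s| ^ 3) := by
        refine (abs_add_le _ _).trans (add_le_add ?_ ?_)
        · rw [abs_mul, abs_of_pos hm]; gcongr
        · rw [abs_mul]; gcongr
    _ = (ρ ^ 2 * s ^ 4 + |H| * |ρ| * |s| ^ 3) / m := by
        rw [abs_div, abs_of_pos hm]; field_simp

lemma tendsto_mul_jacBase_sub_one (H ρ t : ℝ) :
    Tendsto (fun m => m * (jacBase H ρ m t - 1)) atTop (𝓝 (H * t - ρ / 2 * t ^ 2)) := by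
  rw [tendsto_iff_norm_sub_tendsto_zero]
  refine squeeze_zero' (Eventually.of_forall fun m => norm_nonneg _) ?_
    (tendsto_const_nhds (x := ρ ^ 2 * t ^ 4 + |H| * |ρ| * |t| ^ 3).div_atTop tendsto_id)
  filter_upwards [eventually_gt_atTop 0, eventually_ge_atTop (|ρ| * t ^ 2)] with m hm hmt
  exact abs_mul_jacBase_sub_one_sub_le hm hmt

lemma eventually_forall_jacBase_pos (H ρ t : ℝ) :
    ∀ᶠ m in atTop, ∀ s, |s| ≤ |t| → 0 < jacBase H ρ m s := by
  filter_upwards [eventually_ge_atTop 1, eventually_ge_atTop (|ρ| * t ^ 2),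
    eventually_gt_atTop (ρ ^ 2 * t ^ 4 + |H| * |ρ| * |t| ^ 3 + |H| * |t| + |ρ| / 2 * t ^ 2)]
    with m hm1 hmt hmC s hs
  have hm : 0 < m := by linarith
  have hs2 : s ^ 2 ≤ t ^ 2 := sq_le_sq.2 hs
  have hs3 : |s| ^ 3 ≤ |t| ^ 3 := by gcongr
  have hs4 : s ^ 4 ≤ t ^ 4 := by
    rw [← Even.pow_abs ⟨2, rfl⟩ s, ← Even.pow_abs ⟨2, rfl⟩ t]; gcongr
  have herr := abs_mul_jacBase_sub_one_sub_le (H := H) hm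
    ((mul_le_mul_of_nonneg_left hs2 (abs_nonneg ρ)).trans hmt)
  have herr_le : (ρ ^ 2 * s ^ 4 + |H| * |ρ| * |s| ^ 3) / m ≤ ρ ^ 2 * t ^ 4 + |H| * |ρ| * |t| ^ 3 :=
    (div_le_self (by positivity) hm1).trans (by gcongr)
  have hmain : |H * s - ρ / 2 * s ^ 2| ≤ |H| * |t| + |ρ| / 2 * t ^ 2 := by
    refine (abs_sub _ _).trans ?_
    rw [abs_mul, abs_mul, abs_div, abs_two, abs_of_nonneg (sq_nonneg s)]
    gcongr
  have hprod : 0 < m * jacBase H ρ m s := by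
    linarith [abs_le.1 herr, neg_abs_le (H * s - ρ / 2 * s ^ 2), mul_sub_one m (jacBase H ρ m s)]
  exact pos_of_mul_pos_right hprod hm.le

lemma truncPos_eq_self {f : ℝ → ℝ} {t : ℝ} (hf : ∀ s, |s| ≤ |t| → f s ≠ 0) :
    truncPos f t = f t := by
  rw [truncPos, if_neg]
  rintro ⟨s, ⟨hs₁, hs₂⟩, hs⟩
  refine hf s (abs_le.2 ⟨?_, ?_⟩) hs
  · linarith [le_min (neg_abs_le t) (neg_nonpos.2 (abs_nonneg t))]
  · linarith [max_le (le_abs_self t) (abs_nonneg t)]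

/-- pointwise limit of `J_{H,ρ,m}` as `m → ∞` is `exp(Ht − (ρ/2)t²)`. -/
theorem stmt1 (H ρ t : ℝ) :
    Filter.Tendsto (fun m : ℝ => Jfun H ρ m t) Filter.atTop
      (nhds (Real.exp (H * t - ρ / 2 * t ^ 2))) := by
  have hJ : ∀ᶠ m in atTop, (1 + (jacBase H ρ m t - 1)) ^ m = Jfun H ρ m t := by
    filter_upwards [eventually_forall_jacBase_pos H ρ t] with m hpos
    change _ = truncPos (jacBase H ρ m) t ^ m
    rw [add_sub_cancel, truncPos_eq_self fun s hs => (hpos s hs).ne']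
  exact (Real.tendsto_one_add_rpow_exp_of_tendsto (tendsto_mul_jacBase_sub_one H ρ t)).congr' hJ
end

section
/- Let f : ℝ → ℝ₊ be a log-concave function and fix v ∈ (0,1). Then the function (a,b) ↦ I♭(f,[a,b])(v) is nonincreasing in b and nondecreasing in a on the domain {a < b} ⊂ ℝ² (over pairs for which 0 < ∫_a^b f < ∞). -/
/-!
Write `F x = ∫ s in a..x, f s`. For log-concave `f` and `a ≤ x ≤ x'` with `0 < f x < f x'`, the
exponential through `(x, f x)` and `(x', f x')` lies above `f` left of `x` and below `f` on
`[x, x']`; integrating gives `(f x' - f x) * F x ≤ f x * (F x' - F x)`. If `x` is the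
`α`-quantile of `f` on `[a, b]` and `x' ≥ x` the `α`-quantile on `[a, b']`, this is exactly
`f x' / F b' ≤ f x / F b`. With `α = v` (left half-lines) and `α = 1 - v` (right half-lines)
this shows that `I♭` does not increase when `b` grows; the reflection `s ↦ -s` handles `a`.
-/

open scoped Classical
open MeasureTheory

/-- Half-line isoperimetric profile `I♭(f,[a,b])(v)`: the infimum of the (normalized)
boundary densities of half-lines `(−∞,x]` or `[x,∞)` carrying mass `v` of the probability
measure with density proportional to `f` on `[a,b]`. -/
noncomputable def Iflat (f : ℝ → ℝ) (a b v : ℝ) : ℝ :=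
  sInf { y : ℝ | ∃ x ∈ Set.Icc a b,
    ((∫ s in a..x, f s) = v * ∫ s in a..b, f s ∨
     (∫ s in x..b, f s) = v * ∫ s in a..b, f s) ∧
    y = f x / ∫ s in a..b, f s }

/-- A nonnegative function is log-concave if `−log f` is convex
(equivalently, the multiplicative inequality below). -/
def LogConcaveFn (f : ℝ → ℝ) : Prop :=
  (∀ x, 0 ≤ f x) ∧ ∀ x y : ℝ, ∀ t ∈ Set.Icc (0:ℝ) 1,
    f x ^ t * f y ^ (1 - t) ≤ f (t * x + (1 - t) * y)

open Set Real

lemma integral_mul_exp_mul_sub (A c x p q : ℝ) (hc : c ≠ 0) :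
    ∫ y in p..q, A * exp (c * (y - x)) = A * (exp (c * (q - x)) - exp (c * (p - x))) / c := by
  have h := intervalIntegral.mul_integral_comp_mul_sub (f := exp) (a := p) (b := q) c (c * x)
  simp only [integral_exp, ← mul_sub] at h
  rw [intervalIntegral.integral_const_mul, ← h]
  field_simp

namespace LogConcaveFn

variable {f : ℝ → ℝ}

lemma comp_neg (hf : LogConcaveFn f) : LogConcaveFn (fun s => f (-s)) := by
  refine ⟨fun x => hf.1 _, fun x y t ht => ?_⟩
  convert hf.2 (-x) (-y) t ht using 2
  ring

lemma convex_setOf_pos (hf : LogConcaveFn f) : Convex ℝ {x | 0 < f x} := by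
  intro x hx y hy s t hs ht hst
  obtain rfl : t = 1 - s := by linarith
  exact (mul_pos (rpow_pos_of_pos hx s) (rpow_pos_of_pos hy _)).trans_le
    (hf.2 x y s ⟨hs, by linarith⟩)

lemma concaveOn_log (hf : LogConcaveFn f) : ConcaveOn ℝ {x | 0 < f x} (fun x => log (f x)) := by
  refine ⟨hf.convex_setOf_pos, fun x hx y hy s t hs ht hst => ?_⟩
  obtain rfl : t = 1 - s := by linarith
  have hpos : 0 < f x ^ s * f y ^ (1 - s) := mul_pos (rpow_pos_of_pos hx s) (rpow_pos_of_pos hy _)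
  calc s • log (f x) + (1 - s) • log (f y) = log (f x ^ s * f y ^ (1 - s)) := by
        rw [log_mul (rpow_pos_of_pos hx s).ne' (rpow_pos_of_pos hy _).ne', log_rpow hx,
          log_rpow hy, smul_eq_mul, smul_eq_mul]
    _ ≤ log (f (s • x + (1 - s) • y)) := log_le_log hpos (hf.2 x y s ⟨hs, by linarith⟩)

section ExponentialComparison

variable {x x' y : ℝ}

lemma le_mul_exp_slope_of_le (hf : LogConcaveFn f) (hx : 0 < f x) (hx' : 0 < f x')
    (hxx' : x < x') (hyx : y ≤ x) :
    f y ≤ f x * exp (slope (fun s => log (f s)) x x' * (y - x)) := by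
  rcases hyx.eq_or_lt with rfl | hyx
  · simp
  rcases (hf.1 y).eq_or_lt with hy0 | hy
  · rw [← hy0]; positivity
  have hslope := hf.concaveOn_log.slope_anti hx ⟨hy, hyx.ne⟩ ⟨hx', hxx'.ne'⟩ (hyx.le.trans hxx'.le)
  rw [slope_def_field _ x y, le_div_iff_of_neg (sub_neg.2 hyx)] at hslope
  calc f y = exp (log (f y)) := (exp_log hy).symm
    _ ≤ exp (log (f x) + slope (fun s => log (f s)) x x' * (y - x)) := exp_le_exp.2 (by linarith)
    _ = _ := by rw [exp_add, exp_log hx]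

lemma mul_exp_slope_le_of_mem_Icc (hf : LogConcaveFn f) (hx : 0 < f x) (hx' : 0 < f x')
    (hy : y ∈ Icc x x') :
    f x * exp (slope (fun s => log (f s)) x x' * (y - x)) ≤ f y := by
  rcases hy.1.eq_or_lt with rfl | hxy
  · simp
  have hy0 : 0 < f y := hf.convex_setOf_pos.ordConnected.out hx hx' hy
  have hslope := hf.concaveOn_log.slope_anti hx ⟨hy0, hxy.ne'⟩ ⟨hx', (hxy.trans_le hy.2).ne'⟩ hy.2
  rw [slope_def_field _ x y, le_div_iff₀ (sub_pos.2 hxy)] at hslope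
  calc f x * exp (slope (fun s => log (f s)) x x' * (y - x))
        = exp (log (f x) + slope (fun s => log (f s)) x x' * (y - x)) := by rw [exp_add, exp_log hx]
    _ ≤ exp (log (f y)) := exp_le_exp.2 (by linarith)
    _ = f y := exp_log hy0

end ExponentialComparison

theorem sub_mul_integral_le (hf : LogConcaveFn f) {a x x' : ℝ} (hax : a ≤ x) (hxx' : x ≤ x')
    (hi : IntervalIntegrable f volume a x') :
    (f x' - f x) * ∫ s in a..x, f s ≤ f x * ∫ s in x..x', f s := by
  have hi₁ : IntervalIntegrable f volume a x :=
    hi.mono_set (uIcc_subset_uIcc_left (mem_uIcc_of_le hax hxx'))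
  have hi₂ : IntervalIntegrable f volume x x' :=
    hi.mono_set (uIcc_subset_uIcc_right (mem_uIcc_of_le hax hxx'))
  have hI₁ : 0 ≤ ∫ s in a..x, f s := intervalIntegral.integral_nonneg hax fun s _ => hf.1 s
  have hI₂ : 0 ≤ ∫ s in x..x', f s := intervalIntegral.integral_nonneg hxx' fun s _ => hf.1 s
  rcases le_or_gt (f x') (f x) with hle | hlt
  · nlinarith [hf.1 x]
  have hx' : 0 < f x' := (hf.1 x).trans_lt hlt
  have hxx' : x < x' := hxx'.lt_of_ne (by rintro rfl; exact hlt.false)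
  rcases (hf.1 x).eq_or_lt with hx0 | hx
  · have hzero : EqOn f 0 (uIcc a x) := by
      intro y hy
      by_contra hne
      rw [uIcc_of_le hax] at hy
      have := hf.convex_setOf_pos.ordConnected.out ((hf.1 y).lt_of_ne' hne) hx'
        ⟨hy.2, hxx'.le⟩
      exact this.ne hx0
    rw [intervalIntegral.integral_congr hzero, ← hx0]
    simp
  set c := slope (fun s => log (f s)) x x' with hc_def
  rw [slope_def_field] at hc_def
  have hc : 0 < c := by
    rw [hc_def]
    exact div_pos (sub_pos.2 (log_lt_log hx hlt)) (sub_pos.2 hxx')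
  have hexp : exp (c * (x' - x)) = f x' / f x := by
    rw [hc_def, div_mul_cancel₀ _ (sub_pos.2 hxx').ne', exp_sub, exp_log hx, exp_log hx']
  have hcont : ∀ p q, IntervalIntegrable (fun y => f x * exp (c * (y - x))) volume p q :=
    fun p q => (by fun_prop : Continuous fun y => f x * exp (c * (y - x))).intervalIntegrable p q
  have hleft : ∫ s in a..x, f s ≤ f x / c := calc
    ∫ s in a..x, f s ≤ ∫ y in a..x, f x * exp (c * (y - x)) :=
      intervalIntegral.integral_mono_on hax hi₁ (hcont a x)
        fun y hy => hf.le_mul_exp_slope_of_le hx hx' hxx' hy.2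
    _ = f x * (1 - exp (c * (a - x))) / c := by
      rw [integral_mul_exp_mul_sub _ _ _ _ _ hc.ne', sub_self, mul_zero, exp_zero]
    _ ≤ f x / c := by gcongr; nlinarith [exp_pos (c * (a - x))]
  have hright : (f x' - f x) / c ≤ ∫ s in x..x', f s := calc
    (f x' - f x) / c = ∫ y in x..x', f x * exp (c * (y - x)) := by
      rw [integral_mul_exp_mul_sub _ _ _ _ _ hc.ne', hexp, sub_self, mul_zero, exp_zero,
        mul_sub, mul_div_cancel₀ _ hx.ne', mul_one]
    _ ≤ ∫ s in x..x', f s :=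
      intervalIntegral.integral_mono_on hxx'.le (hcont x x') hi₂
        fun y hy => hf.mul_exp_slope_le_of_mem_Icc hx hx' hy
  calc (f x' - f x) * ∫ s in a..x, f s ≤ (f x' - f x) * (f x / c) := by gcongr
    _ = f x * ((f x' - f x) / c) := by ring
    _ ≤ f x * ∫ s in x..x', f s := by gcongr

theorem exists_quantile_mul_le (hf : LogConcaveFn f) {a x b b' α : ℝ} (hα : 0 < α) (hα1 : α ≤ 1)
    (hax : a ≤ x) (hxb : x ≤ b) (hbb' : b ≤ b') (hi : IntervalIntegrable f volume a b')
    (hx : ∫ s in a..x, f s = α * ∫ s in a..b, f s) :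
    ∃ x' ∈ Icc x b', ∫ s in a..x', f s = α * ∫ s in a..b', f s ∧
      f x' * ∫ s in a..b, f s ≤ f x * ∫ s in a..b', f s := by
  have hab' : a ≤ b' := (hax.trans hxb).trans hbb'
  have hsub : ∀ {p}, p ∈ Icc a b' → IntervalIntegrable f volume a p :=
    fun hp => hi.mono_set (uIcc_subset_uIcc_left (mem_uIcc_of_le hp.1 hp.2))
  set T := ∫ s in a..b, f s
  set T' := ∫ s in a..b', f s
  have hTT' : T ≤ T' := intervalIntegral.integral_mono_interval le_rfl (hax.trans hxb) hbb'
    (ae_of_all _ hf.1) hi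
  have hT' : 0 ≤ T' := intervalIntegral.integral_nonneg hab' fun s _ => hf.1 s
  have hcont : ContinuousOn (fun p => ∫ s in a..p, f s) (Icc x b') :=
    (intervalIntegral.continuousOn_primitive_interval' hi left_mem_uIcc).mono
      (by rw [uIcc_of_le hab']; exact Icc_subset_Icc_left hax)
  obtain ⟨x', hx'mem, hx' : ∫ s in a..x', f s = α * T'⟩ :=
    intermediate_value_Icc (hxb.trans hbb') hcont
    (⟨by rw [hx]; gcongr, by nlinarith⟩ : α * T' ∈ Icc (∫ s in a..x, f s) (∫ s in a..b', f s))
  refine ⟨x', hx'mem, hx', ?_⟩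
  have key := hf.sub_mul_integral_le hax hx'mem.1 (hsub ⟨hax.trans hx'mem.1, hx'mem.2⟩)
  rw [← intervalIntegral.integral_interval_sub_left (hsub ⟨hax.trans hx'mem.1, hx'mem.2⟩)
    (hsub ⟨hax, hxb.trans hbb'⟩), hx, hx'] at key
  have : (f x' - f x) * T ≤ f x * (T' - T) := le_of_mul_le_mul_left (by linarith) hα
  linarith

end LogConcaveFn

section Iflat

variable {f : ℝ → ℝ} {a b v : ℝ}

lemma Iflat_le_div (hf : ∀ s, 0 ≤ f s) (hab : a ≤ b) {x : ℝ} (hx : x ∈ Icc a b)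
    (h : ∫ s in a..x, f s = v * ∫ s in a..b, f s ∨ ∫ s in x..b, f s = v * ∫ s in a..b, f s) :
    Iflat f a b v ≤ f x / ∫ s in a..b, f s :=
  csInf_le ⟨0, by
    rintro _ ⟨y, -, -, rfl⟩
    exact div_nonneg (hf y) (intervalIntegral.integral_nonneg hab fun s _ => hf s)⟩ ⟨x, hx, h, rfl⟩

lemma integral_right_eq_iff (hi : IntervalIntegrable f volume a b) {x : ℝ}
    (hx : x ∈ Icc a b) :
    ∫ s in x..b, f s = v * ∫ s in a..b, f s ↔ ∫ s in a..x, f s = (1 - v) * ∫ s in a..b, f s := by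
  rw [← intervalIntegral.integral_interval_sub_left hi
    (hi.mono_set (uIcc_subset_uIcc_left (mem_uIcc_of_le hx.1 hx.2)))]
  constructor <;> intro h <;> linarith

lemma Iflat_comp_neg (f : ℝ → ℝ) (a b v : ℝ) :
    Iflat (fun s => f (-s)) (-b) (-a) v = Iflat f a b v := by
  unfold Iflat
  simp only [intervalIntegral.integral_comp_neg, neg_neg]
  congr 1
  ext y
  constructor
  · rintro ⟨x, hx, h, rfl⟩
    exact ⟨-x, ⟨by linarith [hx.2], by linarith [hx.1]⟩, h.symm, rfl⟩
  · rintro ⟨x, hx, h, rfl⟩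
    exact ⟨-x, ⟨by linarith [hx.2], by linarith [hx.1]⟩, by simpa using h.symm, by simp⟩

end Iflat

theorem LogConcaveFn.Iflat_le_Iflat_of_le_right {f : ℝ → ℝ} (hf : LogConcaveFn f) {a b b' v : ℝ}
    (hv : v ∈ Ioo (0 : ℝ) 1) (hab : a ≤ b) (hbb' : b ≤ b')
    (hi : IntervalIntegrable f volume a b') (hpos : 0 < ∫ s in a..b, f s) :
    Iflat f a b' v ≤ Iflat f a b v := by
  have hab' : a ≤ b' := hab.trans hbb'
  have hiab : IntervalIntegrable f volume a b :=
    hi.mono_set (uIcc_subset_uIcc_left (mem_uIcc_of_le hab hbb'))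
  have hpos' : 0 < ∫ s in a..b', f s := hpos.trans_le <|
    intervalIntegral.integral_mono_interval le_rfl hab hbb' (ae_of_all _ hf.1) hi
  obtain ⟨x₀, hx₀, hx₀v⟩ := intermediate_value_Icc hab
    (intervalIntegral.continuousOn_primitive_interval' hiab left_mem_uIcc |>.mono
      (uIcc_of_le hab).symm.subset)
    (⟨by simp only [intervalIntegral.integral_same]; nlinarith [hv.1], by nlinarith [hv.2]⟩ :
      v * ∫ s in a..b, f s ∈ Icc (∫ s in a..a, f s) (∫ s in a..b, f s))
  refine le_csInf ⟨_, x₀, hx₀, Or.inl hx₀v, rfl⟩ ?_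
  rintro _ ⟨x, hx, hcond, rfl⟩
  obtain ⟨x', hx', hcond', hle⟩ : ∃ x' ∈ Icc a b',
      (∫ s in a..x', f s = v * ∫ s in a..b', f s ∨ ∫ s in x'..b', f s = v * ∫ s in a..b', f s) ∧
      f x' * ∫ s in a..b, f s ≤ f x * ∫ s in a..b', f s := by
    rcases hcond with hleft | hright
    · obtain ⟨x', hx', h, hle⟩ := hf.exists_quantile_mul_le hv.1 hv.2.le hx.1 hx.2 hbb' hi hleft
      exact ⟨x', ⟨hx.1.trans hx'.1, hx'.2⟩, Or.inl h, hle⟩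
    · rw [integral_right_eq_iff hiab hx] at hright
      obtain ⟨x', hx', h, hle⟩ := hf.exists_quantile_mul_le (sub_pos.2 hv.2) (by linarith [hv.1])
        hx.1 hx.2 hbb' hi hright
      have hx'' : x' ∈ Icc a b' := ⟨hx.1.trans hx'.1, hx'.2⟩
      exact ⟨x', hx'', Or.inr ((integral_right_eq_iff hi hx'').2 h), hle⟩
  calc Iflat f a b' v ≤ f x' / ∫ s in a..b', f s := Iflat_le_div hf.1 hab' hx' hcond'
    _ ≤ f x / ∫ s in a..b, f s := by rwa [div_le_div_iff₀ hpos' hpos]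

/-- for log-concave `f` and fixed `v ∈ (0,1)`, the half-line profile
`(a,b) ↦ I♭(f,[a,b])(v)` is nonincreasing in `b` and nondecreasing in `a`
(over pairs with finite positive total mass, ensured by integrability and `hpos`). -/
theorem stmt4 (f : ℝ → ℝ) (hf : LogConcaveFn f) (v : ℝ) (hv : v ∈ Set.Ioo (0:ℝ) 1)
    (a b a' b' : ℝ) (hab : a < b) (hb' : b ≤ b') (ha' : a' ≤ a)
    (hint : IntervalIntegrable f MeasureTheory.volume a' b')
    (hpos : 0 < ∫ s in a..b, f s) :
    Iflat f a b' v ≤ Iflat f a b v ∧ Iflat f a' b v ≤ Iflat f a b v := by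
  refine ⟨hf.Iflat_le_Iflat_of_le_right hv hab.le hb'
    (hint.mono_set (uIcc_subset_uIcc_right (mem_uIcc_of_le ha' (hab.le.trans hb')))) hpos, ?_⟩
  have hia'b : IntervalIntegrable f volume a' b :=
    hint.mono_set (uIcc_subset_uIcc_left (mem_uIcc_of_le (ha'.trans hab.le) hb'))
  rw [← Iflat_comp_neg f a' b, ← Iflat_comp_neg f a b]
  exact hf.comp_neg.Iflat_le_Iflat_of_le_right hv (neg_le_neg hab.le) (neg_le_neg ha')
    ((IntervalIntegrable.iff_comp_neg).1 hia'b).symm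
    (by rwa [intervalIntegral.integral_comp_neg, neg_neg, neg_neg])
end

section
/- Let f : ℝ → ℝ₊ be log-concave and smooth and positive on an interval containing [0,b] with ∫_0^∞ f(s) ds =: F_∞ ∈ (0,∞]. Let F(t) = ∫_0^t f(s) ds and I = f ∘ F⁻¹ : [0,F_∞) → ℝ₊. Then I is concave on [0,F_∞), and consequently I'(x) ≤ I(x)/x for all x ∈ (0,F_∞). -/
open scoped Classical
open MeasureTheory

/-- for smooth positive log-concave `f`, with `F(t) = ∫_0^t f` and `Finv` the
inverse of `F` on `[0,∞)`, the function `I = f ∘ F⁻¹` is concave on `[0,F_∞) = F([0,∞))`,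
and consequently `I'(x) ≤ I(x)/x` for `x ∈ (0,F_∞)`. -/
theorem stmt5 (f : ℝ → ℝ) (hf : LogConcaveFn f) (hsmooth : ContDiff ℝ (⊤ : ℕ∞) f)
    (hpos : ∀ t ≥ (0:ℝ), 0 < f t)
    (Finv : ℝ → ℝ)
    (hFinv : ∀ t ≥ (0:ℝ), Finv (∫ s in (0:ℝ)..t, f s) = t) :
    ConcaveOn ℝ ((fun t => ∫ s in (0:ℝ)..t, f s) '' Set.Ici 0) (fun x => f (Finv x)) ∧
    ∀ x ∈ (fun t => ∫ s in (0:ℝ)..t, f s) '' Set.Ici 0, 0 < x →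
      deriv (fun y => f (Finv y)) x ≤ f (Finv x) / x := by
  obtain ⟨hf0, hflc⟩ := hf
  set F : ℝ → ℝ := fun t => ∫ s in (0:ℝ)..t, f s with hFdef
  have hfc : Continuous f := hsmooth.continuous
  have hF0 : F 0 = 0 := intervalIntegral.integral_same
  have hFs : ∀ t, HasStrictDerivAt F (f t) t := fun t => hfc.integral_hasStrictDerivAt 0 t
  have hFd : ∀ t, HasDerivAt F (f t) t := fun t => (hFs t).hasDerivAt
  have hFcont : Continuous F := continuous_iff_continuousAt.2 fun t => (hFd t).continuousAt
  have hFmono : StrictMonoOn F (Set.Ici 0) := by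
    refine strictMonoOn_of_deriv_pos (convex_Ici 0) hFcont.continuousOn ?_
    intro x hx
    rw [interior_Ici] at hx
    rw [(hFd x).deriv]
    exact hpos x hx.le
  set S := F '' Set.Ici 0 with hSdef
  have hSsub : S ⊆ Set.Ici 0 := by
    rintro x ⟨t, ht, rfl⟩
    exact hF0 ▸ hFmono.monotoneOn Set.self_mem_Ici ht ht
  have h0S : (0:ℝ) ∈ S := ⟨0, Set.self_mem_Ici, hF0⟩
  have hconvS : Convex ℝ S :=
    convex_iff_ordConnected.mpr (isPreconnected_Ici.image F hFcont.continuousOn).ordConnected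
  have hFinvS : ∀ x ∈ S, 0 ≤ Finv x ∧ F (Finv x) = x := by
    rintro x ⟨t, ht, rfl⟩
    rw [hFinv t ht]
    exact ⟨ht, rfl⟩
  have hFinv0 : Finv 0 = 0 := by
    have h : Finv (F 0) = 0 := hFinv 0 le_rfl
    rwa [hF0] at h
  -- derivative of `I = f ∘ Finv` at positive points of `S`
  have key : ∀ x ∈ S, 0 < x →
      HasDerivAt (fun y => f (Finv y)) (deriv f (Finv x) * (f (Finv x))⁻¹) x ∧ 0 < Finv x := by
    rintro x ⟨t, ht, rfl⟩ hx
    have ht' : 0 < t := by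
      rcases eq_or_lt_of_le (Set.mem_Ici.mp ht) with h | h
      · exfalso; rw [← h, hF0] at hx; exact lt_irrefl 0 hx
      · exact h
    have hftpos : 0 < f t := hpos t ht
    have hev : ∀ᶠ y in nhds t, Finv (F y) = y := by
      filter_upwards [eventually_gt_nhds ht'] with y hy
      exact hFinv y hy.le
    have hinv : HasStrictDerivAt Finv (f t)⁻¹ (F t) :=
      (hFs t).to_local_left_inverse (ne_of_gt hftpos) hev
    have hfd : HasDerivAt f (deriv f t) t := (hsmooth.differentiable (by simp) t).hasDerivAt
    rw [hFinv t ht]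
    refine ⟨?_, ht'⟩
    have hg : HasDerivAt f (deriv f t) (Finv (F t)) := by rw [hFinv t ht]; exact hfd
    exact HasDerivAt.comp (F t) hg hinv.hasDerivAt
  -- concavity of `log ∘ f` on `[0,∞)`
  have hlogc : ConcaveOn ℝ (Set.Ici 0) (fun t => Real.log (f t)) := by
    refine ⟨convex_Ici 0, ?_⟩
    intro x hx y hy a b ha hb hab
    have hfx := hpos x hx
    have hfy := hpos y hy
    have h := hflc x y a ⟨ha, by linarith⟩
    rw [show (1:ℝ) - a = b by linarith] at h
    have habxy : (0:ℝ) ≤ a * x + b * y := by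
      have : (0:ℝ) ≤ a * x := mul_nonneg ha hx
      have : (0:ℝ) ≤ b * y := mul_nonneg hb hy
      positivity
    have hL : Real.log (f x ^ a * f y ^ b) = a * Real.log (f x) + b * Real.log (f y) := by
      rw [Real.log_mul (ne_of_gt (Real.rpow_pos_of_pos hfx a))
        (ne_of_gt (Real.rpow_pos_of_pos hfy b)), Real.log_rpow hfx, Real.log_rpow hfy]
    have hle : Real.log (f x ^ a * f y ^ b) ≤ Real.log (f (a * x + b * y)) :=
      Real.log_le_log (by positivity) h
    rw [hL] at hle
    simpa [smul_eq_mul] using hle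
  have hlogd : ∀ t ∈ Set.Ici (0:ℝ), DifferentiableAt ℝ (fun t => Real.log (f t)) t := by
    intro t ht
    exact (Real.differentiableAt_log (ne_of_gt (hpos t ht))).comp t
      (hsmooth.differentiable (by simp) t)
  have hanti : AntitoneOn (deriv fun t => Real.log (f t)) (Set.Ici 0) :=
    hlogc.antitoneOn_deriv hlogd
  have hlogderiv : ∀ t ≥ (0:ℝ), deriv (fun t => Real.log (f t)) t = deriv f t * (f t)⁻¹ := by
    intro t ht
    have h : HasDerivAt (fun t => Real.log (f t)) ((f t)⁻¹ * deriv f t) t :=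
      (Real.hasDerivAt_log (ne_of_gt (hpos t ht))).comp t
        ((hsmooth.differentiable (by simp) t).hasDerivAt)
    rw [h.deriv]; ring
  -- continuity of `I` on `S`
  have hcont : ContinuousOn (fun y => f (Finv y)) S := by
    intro x hxS
    rcases eq_or_lt_of_le (Set.mem_Ici.mp (hSsub hxS)) with h0 | hx
    · -- x = 0
      subst h0
      have htend : Filter.Tendsto Finv (nhdsWithin 0 S) (nhds 0) := by
        rw [Metric.tendsto_nhdsWithin_nhds]
        intro ε hε
        have hFε : 0 < F (ε/2) := by
          have h2 := hFmono Set.self_mem_Ici (Set.mem_Ici.2 (le_of_lt (half_pos hε))) (half_pos hε)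
          rwa [hF0] at h2
        refine ⟨F (ε/2), hFε, ?_⟩
        intro y hyS hyd
        have hy0 : 0 ≤ y := hSsub hyS
        rw [Real.dist_eq, sub_zero, abs_of_nonneg hy0] at hyd
        obtain ⟨hfi0, hfiF⟩ := hFinvS y hyS
        have hlt : Finv y < ε/2 := by
          by_contra hcon
          push_neg at hcon
          have := hFmono.monotoneOn (Set.mem_Ici.2 (by linarith)) hfi0 hcon
          rw [hfiF] at this
          linarith
        rw [Real.dist_eq, sub_zero, abs_of_nonneg hfi0]
        linarith
      have h1 : ContinuousWithinAt Finv S 0 := by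
        rw [ContinuousWithinAt, hFinv0]
        exact htend
      exact hfc.continuousAt.comp_continuousWithinAt h1
    · exact ((key x hxS hx).1.continuousAt).continuousWithinAt
  have hint_pos : ∀ x ∈ interior S, 0 < x := by
    intro x hx
    have h1 : interior S ⊆ Set.Ioi 0 := by rw [← interior_Ici]; exact interior_mono hSsub
    exact h1 hx
  have hIder : ∀ x ∈ S, 0 < x →
      deriv (fun y => f (Finv y)) x = deriv (fun t => Real.log (f t)) (Finv x) := by
    intro x hxS hx
    obtain ⟨hd, hfipos⟩ := key x hxS hx
    rw [hd.deriv, hlogderiv (Finv x) hfipos.le]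
  have hantiI : AntitoneOn (deriv fun y => f (Finv y)) (interior S) := by
    intro x hxi y hyi hxy
    have hx := hint_pos x hxi
    have hy := hint_pos y hyi
    have hxS := interior_subset hxi
    have hyS := interior_subset hyi
    obtain ⟨hfx0, hFx⟩ := hFinvS x hxS
    obtain ⟨hfy0, hFy⟩ := hFinvS y hyS
    rw [hIder x hxS hx, hIder y hyS hy]
    have hmono : Finv x ≤ Finv y :=
      (hFmono.le_iff_le hfx0 hfy0).1 (by rw [hFx, hFy]; exact hxy)
    exact hanti hfx0 hfy0 hmono
  have hconc : ConcaveOn ℝ S (fun x => f (Finv x)) :=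
    AntitoneOn.concaveOn_of_deriv hconvS hcont
      (fun x hx =>
        ((key x (interior_subset hx) (hint_pos x hx)).1.differentiableAt).differentiableWithinAt)
      hantiI
  refine ⟨hconc, ?_⟩
  intro x hxS hx
  obtain ⟨hd, hfipos⟩ := key x hxS hx
  have hslope := hconc.le_slope_of_hasDerivAt h0S hxS hx hd
  rw [hd.deriv]
  have hs : slope (fun y => f (Finv y)) 0 x = (f (Finv x) - f (Finv 0)) / x := by
    rw [slope_def_field, sub_zero]
  have hI0 : f (Finv 0) = f 0 := by rw [hFinv0]
  have hf00 : 0 ≤ f 0 := hf0 0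
  calc deriv f (Finv x) * (f (Finv x))⁻¹ ≤ slope (fun y => f (Finv y)) 0 x := hslope
    _ = (f (Finv x) - f (Finv 0)) / x := hs
    _ ≤ f (Finv x) / x := by
        have h0 := hf0 (Finv 0)
        gcongr
        linarith
end

section
/- Let μ be a probability measure on ℝ with density proportional to t^{n+q−1} on [ξ, ξ+D] (for fixed D > 0, ξ ≥ 0, n+q > 1). Then for every v ∈ [0,1], the half-line isoperimetric profile satisfies I♭(t^{n+q−1}, [ξ,ξ+D])(v) = ((n+q)/D') · (min(v,1−v)(ζ+1)^{n+q} + max(v,1−v) ζ^{n+q})^{(n+q−1)/(n+q)} / ((ζ+1)^{n+q} − ζ^{n+q}), where ζ = ξ/D and D' = D. In particular, inf over ξ ≥ 0 of I♭(t^{n+q−1},[ξ,ξ+D])(v) equals ((n+q)/D) inf_{ζ ≥ 0} (min(v,1−v)(ζ+1)^{n+q} + max(v,1−v)ζ^{n+q})^{(n+q−1)/(n+q)} / ((ζ+1)^{n+q} − ζ^{n+q}). -/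
/-!
The primitive of `t ^ (p - 1)` is `t ^ p / p`, so on `[a, b]` the half-line `[a, x]` carries
mass `m` exactly when `x ^ p = m * b ^ p + (1 - m) * a ^ p`, and the normalized density there is
`p * (m * b ^ p + (1 - m) * a ^ p) ^ ((p - 1) / p) / (b ^ p - a ^ p)`. This is increasing in `m`,
and the two half-lines of mass `v` end at the levels `m = v` and `m = 1 - v`, so the profile is
its value at `min v (1 - v)`. Writing `[ξ, ξ + D] = D • [ζ, ζ + 1]` extracts the factor `1 / D`.
-/

open scoped Classical
open MeasureTheory

open Set

theorem Iflat_eq_min_of_quantile {f : ℝ → ℝ} {a b : ℝ} (hf : IntervalIntegrable f volume a b)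
    {q : ℝ → ℝ}
    (hq : ∀ m ∈ Icc (0:ℝ) 1, {x ∈ Icc a b | ∫ s in a..x, f s = m * ∫ s in a..b, f s} = {q m})
    {v : ℝ} (hv : v ∈ Icc (0:ℝ) 1) :
    Iflat f a b v = min (f (q v) / ∫ s in a..b, f s) (f (q (1 - v)) / ∫ s in a..b, f s) := by
  set Z := ∫ s in a..b, f s
  have hq' : ∀ m ∈ Icc (0:ℝ) 1, ∀ x, (x ∈ Icc a b ∧ ∫ s in a..x, f s = m * Z) ↔ x = q m :=
    fun m hm x => Set.ext_iff.mp (hq m hm) x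
  have hcompl : ∀ x ∈ Icc a b, (∫ s in x..b, f s) = Z - ∫ s in a..x, f s := fun x hx => by
    rw [eq_sub_iff_add_eq', intervalIntegral.integral_add_adjacent_intervals]
    · exact hf.mono_set (uIcc_subset_uIcc left_mem_uIcc (Icc_subset_uIcc hx))
    · exact hf.mono_set (uIcc_subset_uIcc (Icc_subset_uIcc hx) right_mem_uIcc)
  have hv' : 1 - v ∈ Icc (0:ℝ) 1 := ⟨by linarith [hv.2], by linarith [hv.1]⟩
  have hendpoint : ∀ x, (x ∈ Icc a b ∧
      ((∫ s in a..x, f s) = v * Z ∨ (∫ s in x..b, f s) = v * Z)) ↔ x = q v ∨ x = q (1 - v) := by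
    intro x
    rw [← hq' v hv x, ← hq' (1 - v) hv' x]
    constructor
    · rintro ⟨hx, hleft | hright⟩
      · exact Or.inl ⟨hx, hleft⟩
      · exact Or.inr ⟨hx, by linarith [hcompl x hx]⟩
    · rintro (⟨hx, hleft⟩ | ⟨hx, hright⟩)
      · exact ⟨hx, Or.inl hleft⟩
      · exact ⟨hx, Or.inr (by linarith [hcompl x hx])⟩
  have hset : {y : ℝ | ∃ x ∈ Icc a b,
      ((∫ s in a..x, f s) = v * Z ∨ (∫ s in x..b, f s) = v * Z) ∧ y = f x / Z} =
      {f (q v) / Z, f (q (1 - v)) / Z} := by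
    ext y
    simp only [mem_ofPred_eq, mem_insert_iff, mem_singleton_iff]
    constructor
    · rintro ⟨x, hx, hmass, rfl⟩
      rcases (hendpoint x).mp ⟨hx, hmass⟩ with rfl | rfl
      exacts [Or.inl rfl, Or.inr rfl]
    · rintro (rfl | rfl)
      · obtain ⟨hx, hmass⟩ := (hendpoint (q v)).mpr (Or.inl rfl)
        exact ⟨q v, hx, hmass, rfl⟩
      · obtain ⟨hx, hmass⟩ := (hendpoint (q (1 - v))).mpr (Or.inr rfl)
        exact ⟨q (1 - v), hx, hmass, rfl⟩
  rw [Iflat, hset, csInf_pair]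

theorem rpow_mul_add_one_sub_mul_le {A B e m m' : ℝ} (he : 0 ≤ e) (hA : 0 ≤ A) (hAB : A ≤ B)
    (hm : 0 ≤ m) (hmm' : m ≤ m') :
    (m * B + (1 - m) * A) ^ e ≤ (m' * B + (1 - m') * A) ^ e :=
  Real.rpow_le_rpow (by nlinarith) (by nlinarith) he

section Power

variable {p a b : ℝ}

theorem integral_rpow_sub_one (hp : 0 < p) (a x : ℝ) :
    ∫ s in a..x, s ^ (p - 1) = (x ^ p - a ^ p) / p := by
  rw [integral_rpow (Or.inl (by linarith)), sub_add_cancel]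

theorem setOf_integral_rpow_sub_one_eq_mul (hp : 0 < p) (ha : 0 ≤ a) (hab : a ≤ b) {m : ℝ}
    (hm : m ∈ Icc (0:ℝ) 1) :
    {x ∈ Icc a b | ∫ s in a..x, s ^ (p - 1) = m * ∫ s in a..b, s ^ (p - 1)} =
      {(m * b ^ p + (1 - m) * a ^ p) ^ p⁻¹} := by
  set c := m * b ^ p + (1 - m) * a ^ p
  have hab_p : a ^ p ≤ b ^ p := Real.rpow_le_rpow ha hab hp.le
  have hac : a ^ p ≤ c := by nlinarith [hm.1]
  have hcb : c ≤ b ^ p := by nlinarith [hm.2]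
  have hc : 0 ≤ c := (Real.rpow_nonneg ha p).trans hac
  ext x
  simp only [mem_ofPred_eq, mem_singleton_iff, integral_rpow_sub_one hp, mul_div_assoc',
    div_left_inj' hp.ne']
  constructor
  · rintro ⟨hx, hmass⟩
    exact ((Real.rpow_inv_eq hc (ha.trans hx.1) hp.ne').mpr (by linarith)).symm
  · rintro rfl
    have hxc : (c ^ p⁻¹) ^ p = c := Real.rpow_inv_rpow hc hp.ne'
    have hx : 0 ≤ c ^ p⁻¹ := Real.rpow_nonneg hc _
    refine ⟨⟨?_, ?_⟩, by linarith⟩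
    · rwa [← Real.rpow_le_rpow_iff ha hx hp, hxc]
    · rwa [← Real.rpow_le_rpow_iff hx (ha.trans hab) hp, hxc]

theorem Iflat_rpow_sub_one (hp : 1 < p) (ha : 0 ≤ a) (hab : a < b) {v : ℝ}
    (hv : v ∈ Icc (0:ℝ) 1) :
    Iflat (fun t => t ^ (p - 1)) a b v =
      p * (min v (1 - v) * b ^ p + max v (1 - v) * a ^ p) ^ ((p - 1) / p) / (b ^ p - a ^ p) := by
  have hp0 : 0 < p := by linarith
  have hab_p : a ^ p < b ^ p := Real.rpow_lt_rpow ha hab hp0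
  have hcont : Continuous fun s : ℝ => s ^ (p - 1) :=
    continuous_iff_continuousAt.mpr fun x => Real.continuousAt_rpow_const x _ (Or.inr (by linarith))
  rw [Iflat_eq_min_of_quantile (hcont.intervalIntegrable a b)
    (fun m hm => setOf_integral_rpow_sub_one_eq_mul hp0 ha hab.le hm) hv,
    integral_rpow_sub_one hp0]
  have hdensity : ∀ m ∈ Icc (0:ℝ) 1, ((m * b ^ p + (1 - m) * a ^ p) ^ p⁻¹) ^ (p - 1) /
      ((b ^ p - a ^ p) / p) =
      p * (m * b ^ p + (1 - m) * a ^ p) ^ ((p - 1) / p) / (b ^ p - a ^ p) := by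
    intro m hm
    have hc : 0 ≤ m * b ^ p + (1 - m) * a ^ p := by
      nlinarith [Real.rpow_nonneg ha p, hm.1, hm.2]
    rw [← Real.rpow_mul hc, inv_mul_eq_div, div_div_eq_mul_div, mul_comm]
  rw [hdensity v hv, hdensity (1 - v) ⟨by linarith [hv.2], by linarith [hv.1]⟩]
  have hmono : ∀ m m' : ℝ, 0 ≤ m → m ≤ m' →
      p * (m * b ^ p + (1 - m) * a ^ p) ^ ((p - 1) / p) / (b ^ p - a ^ p) ≤
        p * (m' * b ^ p + (1 - m') * a ^ p) ^ ((p - 1) / p) / (b ^ p - a ^ p) :=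
    fun m m' hm hmm' => div_le_div_of_nonneg_right (mul_le_mul_of_nonneg_left
      (rpow_mul_add_one_sub_mul_le (div_nonneg (by linarith) hp0.le) (Real.rpow_nonneg ha p)
        hab_p.le hm hmm') hp0.le) (by linarith)
  rcases le_total v (1 - v) with h | h
  · rw [min_eq_left (hmono _ _ hv.1 h), min_eq_left h, max_eq_right h]
  · rw [min_eq_right (hmono _ _ (by linarith [hv.2]) h), min_eq_right h, max_eq_left h,
      sub_sub_cancel]

theorem Iflat_rpow_sub_one_Icc_add {D ξ : ℝ} (hp : 1 < p) (hD : 0 < D) (hξ : 0 ≤ ξ) {v : ℝ}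
    (hv : v ∈ Icc (0:ℝ) 1) :
    Iflat (fun t => t ^ (p - 1)) ξ (ξ + D) v =
      (p / D) * (min v (1 - v) * (ξ / D + 1) ^ p + max v (1 - v) * (ξ / D) ^ p) ^ ((p - 1) / p)
        / ((ξ / D + 1) ^ p - (ξ / D) ^ p) := by
  set ζ := ξ / D
  have hζ : 0 ≤ ζ := div_nonneg hξ hD.le
  have hξζ : ξ = D * ζ := (mul_div_cancel₀ ξ hD.ne').symm
  have hξDζ : ξ + D = D * (ζ + 1) := by rw [hξζ]; ring
  have hDp : 0 ≤ D ^ p := Real.rpow_nonneg hD.le p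
  have hnum : (min v (1 - v) * (ξ + D) ^ p + max v (1 - v) * ξ ^ p) ^ ((p - 1) / p) =
      D ^ (p - 1) * (min v (1 - v) * (ζ + 1) ^ p + max v (1 - v) * ζ ^ p) ^ ((p - 1) / p) := by
    have hm : 0 ≤ min v (1 - v) := le_min hv.1 (by linarith [hv.2])
    have hM : 0 ≤ max v (1 - v) := le_max_of_le_left hv.1
    rw [hξDζ, hξζ, Real.mul_rpow hD.le (by linarith), Real.mul_rpow hD.le hζ,
      show ∀ m M X Y : ℝ, m * (D ^ p * X) + M * (D ^ p * Y) = D ^ p * (m * X + M * Y) by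
        intros; ring,
      Real.mul_rpow hDp (by positivity), ← Real.rpow_mul hD.le, mul_div_cancel₀ _ (by linarith)]
  have hden : (ξ + D) ^ p - ξ ^ p = D ^ p * ((ζ + 1) ^ p - ζ ^ p) := by
    rw [hξDζ, hξζ, Real.mul_rpow hD.le (by linarith), Real.mul_rpow hD.le hζ, mul_sub]
  rw [Iflat_rpow_sub_one hp hξ (by linarith) hv, hnum, hden, Real.rpow_sub_one hD.ne']
  field_simp

end Power

theorem iInf_Ici_zero_comp_div {α : Type*} [InfSet α] (g : ℝ → α) {D : ℝ} (hD : 0 < D) :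
    ⨅ ζ : Ici (0:ℝ), g (ζ / D) = ⨅ ζ : Ici (0:ℝ), g ζ := by
  have hsurj : Function.Surjective
      fun x : Ici (0:ℝ) => (⟨x / D, div_nonneg x.2 hD.le⟩ : Ici (0:ℝ)) := fun z =>
    ⟨⟨z * D, mul_nonneg z.2 hD.le⟩, Subtype.ext (mul_div_cancel_right₀ _ hD.ne')⟩
  exact hsurj.iInf_comp fun z : Ici (0:ℝ) => g z

/-- explicit formula for the half-line profile of the density `t^{p−1}`
(`p = n+q > 1`) on `[ξ,ξ+D]`, and the resulting formula for the infimum over `ξ ≥ 0`. -/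
theorem stmt7 (p D ξ : ℝ) (hp : 1 < p) (hD : 0 < D) (hξ : 0 ≤ ξ) (v : ℝ)
    (hv : v ∈ Set.Icc (0:ℝ) 1) :
    Iflat (fun t => t ^ (p - 1)) ξ (ξ + D) v =
      (p / D) * (min v (1 - v) * (ξ / D + 1) ^ p + max v (1 - v) * (ξ / D) ^ p) ^ ((p - 1) / p)
        / ((ξ / D + 1) ^ p - (ξ / D) ^ p) ∧
    (⨅ ζ : Set.Ici (0:ℝ), Iflat (fun t => t ^ (p - 1)) (ζ:ℝ) ((ζ:ℝ) + D) v) =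
      (p / D) * ⨅ ζ : Set.Ici (0:ℝ),
        (min v (1 - v) * ((ζ:ℝ) + 1) ^ p + max v (1 - v) * (ζ:ℝ) ^ p) ^ ((p - 1) / p)
          / (((ζ:ℝ) + 1) ^ p - (ζ:ℝ) ^ p) := by
  refine ⟨Iflat_rpow_sub_one_Icc_add hp hD hξ hv, ?_⟩
  rw [Real.mul_iInf_of_nonneg (div_nonneg (by linarith) hD.le)]
  refine (iInf_congr fun ζ => ?_).trans (iInf_Ici_zero_comp_div (fun z => p / D *
    ((min v (1 - v) * (z + 1) ^ p + max v (1 - v) * z ^ p) ^ ((p - 1) / p) /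
      ((z + 1) ^ p - z ^ p))) hD)
  rw [Iflat_rpow_sub_one_Icc_add hp hD ζ.2 hv, mul_div_assoc]
end

section
/- Let D > 0 and let μ_H be the probability measure on [0,D] with density proportional to exp(Ht), H ≥ 0. Then for every v ∈ [0,1]: inf_{H ≥ 0} I♭(exp(Ht),[0,D])(v) = (1/D) inf_{w > 0} (min(v,1−v) + w) log(1 + 1/w). -/
open scoped Classical
open MeasureTheory

/-!
For `f = exp(H·)` on `[0,D]` we have `f = H F + 1` with `F` the primitive of `f`, so the boundary
density of a half-line is an affine function of its mass, and
`I♭(v) = H min(v,1−v) + 1/Z_H` with `Z_H = (e^{HD}−1)/H`. The change of variables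
`w = 1/(e^{HD}−1)`, i.e. `H = log(1+1/w)/D`, maps `H > 0` bijectively onto `w > 0` and turns
this value into `(min(v,1−v)+w) log(1+1/w)/D`. The remaining value `1/D` at `H = 0` is the limit
as `w → ∞` and so does not lower the infimum.
-/

open Set Real

lemma exists_mem_Icc_integral_eq {f : ℝ → ℝ} (hf : Continuous f) {a b y : ℝ} (hab : a ≤ b)
    (hy : y ∈ Icc 0 (∫ s in a..b, f s)) : ∃ x ∈ Icc a b, ∫ s in a..x, f s = y := by
  have hF : ContinuousOn (fun x => ∫ s in a..x, f s) (Icc a b) :=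
    (intervalIntegral.continuous_primitive
      (fun _ _ => hf.intervalIntegrable (μ := volume) _ _) a).continuousOn
  simpa using intermediate_value_Icc hab hF (by simpa using hy)

theorem Iflat_eq_of_eq_comp_primitive {f φ : ℝ → ℝ} {a b v : ℝ} (hf : Continuous f)
    (hab : a ≤ b) (hZ : 0 ≤ ∫ s in a..b, f s)
    (hφ : ∀ x ∈ Icc a b, f x = φ (∫ s in a..x, f s)) (hv : v ∈ Icc (0:ℝ) 1) :
    Iflat f a b v = min (φ (v * ∫ s in a..b, f s)) (φ ((1 - v) * ∫ s in a..b, f s)) /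
      ∫ s in a..b, f s := by
  unfold Iflat
  set Z := ∫ s in a..b, f s
  have right_iff :
      ∀ x u, (∫ s in x..b, f s) = u * Z ↔ (∫ s in a..x, f s) = (1 - u) * Z := by
    intro x u
    have := intervalIntegral.integral_add_adjacent_intervals
      (hf.intervalIntegrable (μ := volume) a x) (hf.intervalIntegrable x b)
    constructor <;> intro h <;> linarith
  have attained : ∀ u ∈ Icc (0:ℝ) 1, ∃ x ∈ Icc a b, ∫ s in a..x, f s = u * Z :=
    fun u hu => exists_mem_Icc_integral_eq hf hab ⟨mul_nonneg hu.1 hZ, by nlinarith [hu.2]⟩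
  have hset : {y : ℝ | ∃ x ∈ Icc a b, ((∫ s in a..x, f s) = v * Z ∨
      (∫ s in x..b, f s) = v * Z) ∧ y = f x / Z} = {φ (v * Z) / Z, φ ((1 - v) * Z) / Z} := by
    ext y
    simp only [mem_ofPred_eq, mem_insert_iff, mem_singleton_iff, right_iff]
    constructor
    · rintro ⟨x, hx, hmass | hmass, rfl⟩
      · exact Or.inl (by rw [hφ x hx, hmass])
      · exact Or.inr (by rw [hφ x hx, hmass])
    · rintro (rfl | rfl)
      · obtain ⟨x, hx, hmass⟩ := attained v hv
        exact ⟨x, hx, Or.inl hmass, by rw [hφ x hx, hmass]⟩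
      · obtain ⟨x, hx, hmass⟩ := attained (1 - v) ⟨by linarith [hv.2], by linarith [hv.1]⟩
        exact ⟨x, hx, Or.inr hmass, by rw [hφ x hx, hmass]⟩
  rw [hset, csInf_pair]
  exact min_div_div_right hZ _ _

lemma exp_mul_eq_mul_integral_add_one (H x : ℝ) :
    exp (H * x) = H * (∫ s in (0:ℝ)..x, exp (H * s)) + 1 := by
  rw [intervalIntegral.mul_integral_comp_mul_left (f := exp), integral_exp]
  simp

lemma integral_exp_mul_pos (H : ℝ) {D : ℝ} (hD : 0 < D) :
    0 < ∫ s in (0:ℝ)..D, exp (H * s) :=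
  intervalIntegral.intervalIntegral_pos_of_pos
    ((by fun_prop : Continuous fun s => exp (H * s)).intervalIntegrable 0 D) (fun _ => exp_pos _) hD

theorem Iflat_exp_mul {H D v : ℝ} (hH : 0 ≤ H) (hD : 0 < D) (hv : v ∈ Icc (0:ℝ) 1) :
    Iflat (fun t => exp (H * t)) 0 D v =
      H * min v (1 - v) + 1 / ∫ s in (0:ℝ)..D, exp (H * s) := by
  have hZ := integral_exp_mul_pos H hD
  rw [Iflat_eq_of_eq_comp_primitive (φ := fun y => H * y + 1) (by fun_prop) hD.le hZ.le
    (fun x _ => exp_mul_eq_mul_integral_add_one H x) hv, min_add_add_right,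
    ← mul_min_of_nonneg _ _ hH, ← min_mul_of_nonneg _ _ hZ.le]
  field_simp

theorem Iflat_exp_mul_log_one_add_inv {w D v : ℝ} (hw : 0 < w) (hD : 0 < D)
    (hv : v ∈ Icc (0:ℝ) 1) :
    Iflat (fun t => exp (log (1 + 1 / w) / D * t)) 0 D v =
      1 / D * ((min v (1 - v) + w) * log (1 + 1 / w)) := by
  set H := log (1 + 1 / w) / D
  have hH : 0 < H := div_pos (log_pos (by simp [hw])) hD
  have hHZ : H * ∫ s in (0:ℝ)..D, exp (H * s) = 1 / w := by
    have := exp_mul_eq_mul_integral_add_one H D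
    rw [div_mul_cancel₀ _ hD.ne', exp_log (by positivity)] at this
    linarith
  have hZ : 1 / ∫ s in (0:ℝ)..D, exp (H * s) = H * w := by
    have := integral_exp_mul_pos H hD
    field_simp at hHZ ⊢
    linarith
  rw [Iflat_exp_mul hH.le hD hv, hZ]
  ring

lemma exists_log_one_add_inv_div_eq {H D : ℝ} (hH : 0 < H) (hD : 0 < D) :
    ∃ w > 0, log (1 + 1 / w) / D = H := by
  have hE : 0 < exp (H * D) - 1 := by
    linarith [add_one_lt_exp (mul_pos hH hD).ne', mul_pos hH hD]
  refine ⟨1 / (exp (H * D) - 1), by positivity, ?_⟩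
  rw [one_div_one_div, add_sub_cancel, log_exp, mul_div_cancel_right₀ _ hD.ne']

lemma bddBelow_range_mul_log_one_add_inv {m : ℝ} (hm : 0 ≤ m) :
    BddBelow (range fun w : Ioi (0:ℝ) => (m + w) * log (1 + 1 / w)) :=
  ⟨0, by
    rintro _ ⟨⟨w, hw : 0 < w⟩, rfl⟩
    exact mul_nonneg (by linarith) (log_nonneg (by simp [hw.le]))⟩

lemma iInf_mul_log_one_add_inv_le_one {m : ℝ} (hm : 0 ≤ m) :
    ⨅ w : Ioi (0:ℝ), (m + w) * log (1 + 1 / w) ≤ 1 := by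
  refine le_of_forall_pos_le_add fun ε hε => ?_
  obtain ⟨w, hw, hεw⟩ : ∃ w > 0, m ≤ ε * w :=
    ⟨(m + 1) / ε, by positivity, by rw [mul_div_cancel₀ _ hε.ne']; linarith⟩
  have hlog : log (1 + 1 / w) ≤ 1 / w := by
    linarith [log_le_sub_one_of_pos (x := 1 + 1 / w) (by positivity)]
  calc ⨅ w : Ioi (0:ℝ), (m + w) * log (1 + 1 / w)
      ≤ (m + w) * log (1 + 1 / w) := ciInf_le (bddBelow_range_mul_log_one_add_inv hm) ⟨w, hw⟩
    _ ≤ (m + w) * (1 / w) := mul_le_mul_of_nonneg_left hlog (by linarith)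
    _ = 1 + m / w := by field_simp; ring
    _ ≤ 1 + ε := by gcongr; rw [div_le_iff₀ hw]; linarith

/-- for exponential densities `exp(Ht)` on `[0,D]`,
`inf_{H ≥ 0} I♭(exp(Ht),[0,D])(v) = (1/D)·inf_{w>0}(min(v,1−v)+w)·log(1+1/w)`. -/
theorem stmt8 (D : ℝ) (hD : 0 < D) (v : ℝ) (hv : v ∈ Set.Icc (0:ℝ) 1) :
    (⨅ H : Set.Ici (0:ℝ), Iflat (fun t => Real.exp ((H:ℝ) * t)) 0 D v) =
      (1 / D) * ⨅ w : Set.Ioi (0:ℝ), (min v (1 - v) + (w:ℝ)) * Real.log (1 + 1 / (w:ℝ)) := by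
  have hm : 0 ≤ min v (1 - v) := le_min hv.1 (sub_nonneg.2 hv.2)
  have hprofile_bdd :
      BddBelow (range fun H : Ici (0:ℝ) => Iflat (fun t => exp (H * t)) 0 D v) :=
    ⟨0, by
      rintro _ ⟨⟨H, hH⟩, rfl⟩
      have := integral_exp_mul_pos H hD
      dsimp only
      rw [Iflat_exp_mul hH hD hv]
      exact add_nonneg (mul_nonneg hH hm) (by positivity)⟩
  apply le_antisymm
  · rw [mul_iInf_of_nonneg (by positivity)]
    refine le_ciInf fun ⟨w, (hw : 0 < w)⟩ => ?_
    rw [← Iflat_exp_mul_log_one_add_inv hw hD hv]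
    exact ciInf_le hprofile_bdd ⟨_, (div_pos (log_pos (by simp [hw])) hD).le⟩
  · refine le_ciInf fun ⟨H, hH⟩ => ?_
    rcases (show (0:ℝ) ≤ H from hH).eq_or_lt with rfl | hpos
    · have hzero : Iflat (fun t => exp (0 * t)) 0 D v = 1 / D := by
        rw [Iflat_exp_mul le_rfl hD hv]
        simp
      rw [hzero]
      exact mul_le_of_le_one_right (by positivity) (iInf_mul_log_one_add_inv_le_one hm)
    · obtain ⟨w, hw, rfl⟩ := exists_log_one_add_inv_div_eq hpos hD
      rw [Iflat_exp_mul_log_one_add_inv hw hD hv]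
      exact mul_le_mul_of_nonneg_left
        (ciInf_le (bddBelow_range_mul_log_one_add_inv hm) ⟨w, hw⟩) (by positivity)
end
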